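/- Transport identity for the cofactor: if y : ℝ³ × ℝ → ℝ³ is C² with F = ∇_x y and v = ∂_t y, then ∂_t (cof F)_{kγ} = Σ_{α} ∂_α ( ε_{ijk} ε_{αβγ} F_{jβ} v_i ) for each k, γ (summing over i, j, β as well). -/

import Mathlib

/-- The Levi-Civita symbol on three indices. -/
noncomputable def eps (i j k : Fin 3) : ℝ :=
  ((j : ℝ) - (i : ℝ)) * ((k : ℝ) - (j : ℝ)) * ((k : ℝ) - (i : ℝ)) / 2

/-- The cofactor matrix of a 3×3 matrix. -/
noncomputable def cof (F : Matrix (Fin 3) (Fin 3) ℝ) : Matrix (Fin 3) (Fin 3) ℝ :=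
  Matrix.transpose (Matrix.adjugate F)

/-- Spatial partial derivative in the α-th direction, for functions of `(x, t)`. -/
noncomputable def pdx (f : (Fin 3 → ℝ) × ℝ → ℝ) (α : Fin 3) (p : (Fin 3 → ℝ) × ℝ) : ℝ :=
  fderiv ℝ f p ((Pi.single α 1 : Fin 3 → ℝ), (0 : ℝ))

/-- Time derivative, for functions of `(x, t)`. -/
noncomputable def pdt (f : (Fin 3 → ℝ) × ℝ → ℝ) (p : (Fin 3 → ℝ) × ℝ) : ℝ :=
  fderiv ℝ f p ((0 : Fin 3 → ℝ), (1 : ℝ))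

/-- The spatial deformation gradient `F = ∇ₓ y`. -/
noncomputable def Fmat (y : (Fin 3 → ℝ) × ℝ → Fin 3 → ℝ) (p : (Fin 3 → ℝ) × ℝ) :
    Matrix (Fin 3) (Fin 3) ℝ :=
  fun i α => pdx (fun q => y q i) α p

/-- The velocity `v = ∂ₜ y`. -/
noncomputable def vvec (y : (Fin 3 → ℝ) × ℝ → Fin 3 → ℝ) (p : (Fin 3 → ℝ) × ℝ) : Fin 3 → ℝ :=
  fun i => pdt (fun q => y q i) p

/-!
Expanding the adjugate, `cof F_{kγ} = ½ ε_{ijk} ε_{αβγ} F_{iα} F_{jβ}`. Exchanging `(i, α)` with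
`(j, β)` flips both symbols, so the two terms of the product rule agree and
`∂ₜ cof F_{kγ} = ε_{ijk} ε_{αβγ} ∂ₜF_{iα} F_{jβ}`, where `∂ₜF_{iα} = ∂_α v_i` by the symmetry of
second derivatives. On the other side the product rule gives the same sum plus
`ε_{ijk} ε_{αβγ} ∂_α F_{jβ} v_i`, which vanishes because `∂_α F_{jβ} = ∂_α ∂_β y_j` is symmetric in
`α, β` while `ε_{αβγ}` is antisymmetric.
-/

lemma eps_swap_left (i j k : Fin 3) : eps j i k = -eps i j k := by
  unfold eps; ring

lemma cof_apply_eq_sum (F : Matrix (Fin 3) (Fin 3) ℝ) (k γ : Fin 3) :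
    cof F k γ = ∑ i, ∑ j, ∑ α, ∑ β, eps i j k * eps α β γ / 2 * F i α * F j β := by
  fin_cases k <;> fin_cases γ <;>
    simp [cof, Matrix.adjugate_fin_three, Fin.sum_univ_three, eps] <;> ring

lemma Fintype.sum_swap_pairs {ι κ M : Type*} [Fintype ι] [Fintype κ] [AddCommMonoid M]
    (f : ι → ι → κ → κ → M) :
    ∑ i, ∑ j, ∑ α, ∑ β, f i j α β = ∑ i, ∑ j, ∑ α, ∑ β, f j i β α := by
  rw [Finset.sum_comm]
  exact Finset.sum_congr rfl fun _ _ => Finset.sum_congr rfl fun _ _ => Finset.sum_comm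

lemma sum_eps_mul_eq_zero_of_symm (γ : Fin 3) (S : Fin 3 → Fin 3 → ℝ)
    (hS : ∀ α β, S α β = S β α) : ∑ α, ∑ β, eps α β γ * S α β = 0 := by
  have h : ∑ α, ∑ β, eps α β γ * S α β = -∑ α, ∑ β, eps α β γ * S α β := by
    conv_lhs => rw [Finset.sum_comm]
    simp only [← Finset.sum_neg_distrib]
    refine Fintype.sum_congr _ _ fun β => Fintype.sum_congr _ _ fun α => ?_
    rw [eps_swap_left α β, hS α β]
    ring
  linarith

lemma sum_eps_eps_mul_add_mul_comm (k γ : Fin 3) (A B : Fin 3 → Fin 3 → ℝ) :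
    ∑ i, ∑ j, ∑ α, ∑ β, eps i j k * eps α β γ / 2 * (A i α * B j β + B i α * A j β)
      = ∑ i, ∑ j, ∑ α, ∑ β, eps i j k * eps α β γ * A i α * B j β := by
  have hswap : ∑ i, ∑ j, ∑ α, ∑ β, eps i j k * eps α β γ * B i α * A j β
      = ∑ i, ∑ j, ∑ α, ∑ β, eps i j k * eps α β γ * A i α * B j β := by
    rw [Fintype.sum_swap_pairs]
    refine Fintype.sum_congr _ _ fun i => Fintype.sum_congr _ _ fun j =>
      Fintype.sum_congr _ _ fun α => Fintype.sum_congr _ _ fun β => ?_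
    rw [eps_swap_left j, eps_swap_left β]
    ring
  calc _ = (∑ i, ∑ j, ∑ α, ∑ β, eps i j k * eps α β γ * A i α * B j β
        + ∑ i, ∑ j, ∑ α, ∑ β, eps i j k * eps α β γ * B i α * A j β) / 2 := by
        simp only [← Finset.sum_add_distrib, Finset.sum_div]
        ring_nf
    _ = _ := by rw [hswap]; ring

lemma sum_eps_eps_mul_symm_add (k γ : Fin 3) (A B : Fin 3 → Fin 3 → ℝ)
    (S : Fin 3 → Fin 3 → Fin 3 → ℝ) (hS : ∀ j α β, S j α β = S j β α) (V : Fin 3 → ℝ) :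
    ∑ α, ∑ i, ∑ j, ∑ β, eps i j k * eps α β γ * (S j α β * V i + B j β * A i α)
      = ∑ i, ∑ j, ∑ α, ∑ β, eps i j k * eps α β γ * A i α * B j β := by
  conv_lhs => rw [Finset.sum_comm]
  refine Fintype.sum_congr _ _ fun i => ?_
  conv_lhs => rw [Finset.sum_comm]
  refine Fintype.sum_congr _ _ fun j => ?_
  have hSV : ∑ α, ∑ β, eps i j k * eps α β γ * (S j α β * V i) = 0 := by
    rw [← mul_zero (eps i j k * V i), ← sum_eps_mul_eq_zero_of_symm γ (S j) (hS j)]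
    simp only [Finset.mul_sum]
    exact Fintype.sum_congr _ _ fun α => Fintype.sum_congr _ _ fun β => by ring
  simp only [mul_add, Finset.sum_add_distrib, hSV, zero_add]
  exact Fintype.sum_congr _ _ fun α => Fintype.sum_congr _ _ fun β => by ring

section SecondDerivative

variable {E : Type*} [NormedAddCommGroup E] [NormedSpace ℝ E] {f : E → ℝ}

lemma ContDiff.differentiable_fderiv_apply (hf : ContDiff ℝ 2 f) (w : E) :
    Differentiable ℝ (fun q => fderiv ℝ f q w) :=
  ((hf.fderiv_right (m := 1) (by norm_num)).differentiable (by norm_num)).clm_apply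
    (differentiable_const w)

lemma ContDiff.fderiv_fderiv_apply_comm (hf : ContDiff ℝ 2 f) (p u w : E) :
    fderiv ℝ (fun q => fderiv ℝ f q w) p u = fderiv ℝ (fun q => fderiv ℝ f q u) p w := by
  have hD : DifferentiableAt ℝ (fderiv ℝ f) p :=
    ((hf.fderiv_right (m := 1) (by norm_num)).differentiable (by norm_num)) p
  simp only [fderiv_clm_apply hD (differentiableAt_const _), fderiv_fun_const]
  simpa using (hf.contDiffAt.isSymmSndFDerivAt (by simp)) u w

end SecondDerivative

section DeformationGradient

variable {y : (Fin 3 → ℝ) × ℝ → Fin 3 → ℝ}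

lemma hasFDerivAt_Fmat_apply (hy : ContDiff ℝ 2 y) (i α : Fin 3) (p : (Fin 3 → ℝ) × ℝ) :
    HasFDerivAt (fun q => Fmat y q i α) (fderiv ℝ (fun q => Fmat y q i α) p) p :=
  ((contDiff_pi.mp hy i).differentiable_fderiv_apply _ p).hasFDerivAt

lemma hasFDerivAt_vvec_apply (hy : ContDiff ℝ 2 y) (i : Fin 3) (p : (Fin 3 → ℝ) × ℝ) :
    HasFDerivAt (fun q => vvec y q i) (fderiv ℝ (fun q => vvec y q i) p) p :=
  ((contDiff_pi.mp hy i).differentiable_fderiv_apply _ p).hasFDerivAt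

lemma pdt_Fmat_apply (hy : ContDiff ℝ 2 y) (i α : Fin 3) (p : (Fin 3 → ℝ) × ℝ) :
    pdt (fun q => Fmat y q i α) p = pdx (fun q => vvec y q i) α p :=
  (contDiff_pi.mp hy i).fderiv_fderiv_apply_comm p _ _

lemma pdx_Fmat_apply_comm (hy : ContDiff ℝ 2 y) (j α β : Fin 3) (p : (Fin 3 → ℝ) × ℝ) :
    pdx (fun q => Fmat y q j β) α p = pdx (fun q => Fmat y q j α) β p :=
  (contDiff_pi.mp hy j).fderiv_fderiv_apply_comm p _ _

lemma pdt_cof_Fmat_apply (hy : ContDiff ℝ 2 y) (k γ : Fin 3) (p : (Fin 3 → ℝ) × ℝ) :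
    pdt (fun q => cof (Fmat y q) k γ) p = ∑ i, ∑ j, ∑ α, ∑ β, eps i j k * eps α β γ / 2 *
      (pdx (fun q => vvec y q i) α p * Fmat y p j β
        + Fmat y p i α * pdx (fun q => vvec y q j) β p) := by
  simp only [cof_apply_eq_sum, ← pdt_Fmat_apply hy]
  rw [pdt, (HasFDerivAt.fun_sum fun i _ => HasFDerivAt.fun_sum fun j _ =>
    HasFDerivAt.fun_sum fun α _ => HasFDerivAt.fun_sum fun β _ =>
    ((hasFDerivAt_Fmat_apply hy i α p).const_mul (eps i j k * eps α β γ / 2)).fun_mul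
      (hasFDerivAt_Fmat_apply hy j β p)).fderiv]
  simp only [sum_apply, add_apply,
    smul_apply, smul_eq_mul, pdt]
  exact Fintype.sum_congr _ _ fun i => Fintype.sum_congr _ _ fun j =>
    Fintype.sum_congr _ _ fun α => Fintype.sum_congr _ _ fun β => by ring

lemma pdx_sum_eps_eps_Fmat_mul_vvec (hy : ContDiff ℝ 2 y) (k α γ : Fin 3)
    (p : (Fin 3 → ℝ) × ℝ) :
    pdx (fun q => ∑ i, ∑ j, ∑ β, eps i j k * eps α β γ * Fmat y q j β * vvec y q i) α p
      = ∑ i, ∑ j, ∑ β, eps i j k * eps α β γ *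
          (pdx (fun q => Fmat y q j β) α p * vvec y p i
            + Fmat y p j β * pdx (fun q => vvec y q i) α p) := by
  rw [pdx, (HasFDerivAt.fun_sum fun i _ => HasFDerivAt.fun_sum fun j _ =>
    HasFDerivAt.fun_sum fun β _ =>
    ((hasFDerivAt_Fmat_apply hy j β p).const_mul (eps i j k * eps α β γ)).fun_mul
      (hasFDerivAt_vvec_apply hy i p)).fderiv]
  simp only [sum_apply, add_apply,
    smul_apply, smul_eq_mul, pdx]
  exact Fintype.sum_congr _ _ fun i => Fintype.sum_congr _ _ fun j =>
    Fintype.sum_congr _ _ fun β => by ring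

end DeformationGradient

/-- Transport identity for the cofactor:
`∂ₜ (cof F)_{kγ} = Σ_α ∂_α (ε_{ijk} ε_{αβγ} F_{jβ} v_i)`. -/
theorem cof_transport (y : (Fin 3 → ℝ) × ℝ → Fin 3 → ℝ) (hy : ContDiff ℝ 2 y)
    (p : (Fin 3 → ℝ) × ℝ) (k γ : Fin 3) :
    pdt (fun q => cof (Fmat y q) k γ) p
      = ∑ α, pdx (fun q => ∑ i, ∑ j, ∑ β,
          eps i j k * eps α β γ * Fmat y q j β * vvec y q i) α p := by
  set A : Fin 3 → Fin 3 → ℝ := fun i α => pdx (fun q => vvec y q i) α p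
  rw [pdt_cof_Fmat_apply hy, sum_eps_eps_mul_add_mul_comm k γ A (Fmat y p)]
  simp only [pdx_sum_eps_eps_Fmat_mul_vvec hy]
  rw [sum_eps_eps_mul_symm_add k γ A (Fmat y p) (fun j α β => pdx (fun q => Fmat y q j β) α p)
    (fun j α β => pdx_Fmat_apply_comm hy j α β p)]
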